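/- Let Δ and b be nonnegative integers with b ≤ Δ − 2, and let G be a finite simple graph with maximum degree at most Δ. Then Σ_{v ∈ V(G)} min{d(v), b} ≤ ν(G)·(b + Δ), where ν(G) is the maximum matching size. -/

import Mathlib

def IsMatchingSet {V : Type*} (G : SimpleGraph V) (M : Finset (Sym2 V)) : Prop :=
  (∀ e ∈ M, e ∈ G.edgeSet) ∧ ∀ e ∈ M, ∀ f ∈ M, e ≠ f → ∀ v, v ∈ e → v ∉ f

/-!
Induction on a vertex set `s`, writing `ν(s)` for the matching number of `G[s]`. If deleting a
vertex `v` lowers `ν(s)`, the left-hand side drops by at most `b + Δ`: the term of `v` is at most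
`b`, and each of the at most `Δ` neighbours of `v` loses at most one. If `G[s]` is disconnected,
both sides are additive over a separation. Otherwise `G[s]` is connected and no vertex deletion
lowers `ν(s)`; by Gallai's lemma `|s| ≤ 2ν(s) + 1`, and `|s| · min(|s| - 1, b) ≤ ν(s) (b + Δ)`
because `b + 2 ≤ Δ`.

Gallai's lemma: suppose a maximum matching `M` misses two vertices `u ≠ w` joined by a walk
`u z ⋯ w`. Then `M` covers `z`, and some maximum matching `N` misses `z` and covers `u`. Following
the path from `u` that alternates between `N` and `M` either augments `M`, or ends at a vertex `y`
that `M` covers and `N` misses, and swapping along the path lets `M` trade `y` for `u` and `N` trade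
`u` for `y`. If `y = z` this gives a maximum matching missing both ends of the shorter walk
`z ⋯ w` (induction on the walk); otherwise a maximum matching missing the adjacent vertices `u`
and `z`, which can be augmented.
-/

open Finset

section

variable {V : Type*} {G : SimpleGraph V} {M N : Finset (Sym2 V)} {s t : Finset V} {u v x y : V}
  {e : Sym2 V}

lemma IsMatchingSet.subset (hM : IsMatchingSet G M) (h : N ⊆ M) : IsMatchingSet G N :=
  ⟨fun e he ↦ hM.1 e (h he), fun e he f hf ↦ hM.2 e (h he) f (h hf)⟩

lemma Nat.mul_min_sub_one_le {n m b Δ : ℕ} (hb : b + 2 ≤ Δ) (hn : n ≤ 2 * m + 1) :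
    n * min (n - 1) b ≤ m * (b + Δ) := by
  obtain _ | k := n
  · simp
  rw [Nat.add_sub_cancel]
  rcases le_total k b with h | h
  · rw [min_eq_left h]
    nlinarith [Nat.mul_le_mul_left (k + 1) (show k ≤ 2 * m by omega)]
  · rw [min_eq_right h]
    nlinarith [Nat.mul_le_mul_right b (show k + 1 ≤ 2 * m + 1 by omega)]

namespace SimpleGraph

def restrict (G : SimpleGraph V) (s : Finset V) : SimpleGraph V where
  Adj x y := G.Adj x y ∧ x ∈ s ∧ y ∈ s
  symm := ⟨fun _ _ h ↦ ⟨h.1.symm, h.2.2, h.2.1⟩⟩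
  loopless := ⟨fun _ h ↦ G.irrefl h.1⟩

@[simp]
lemma restrict_adj : (G.restrict s).Adj x y ↔ G.Adj x y ∧ x ∈ s ∧ y ∈ s := Iff.rfl

section degreeOn

variable [DecidableRel G.Adj]

def degreeOn (G : SimpleGraph V) [DecidableRel G.Adj] (s : Finset V) (v : V) : ℕ :=
  #{w ∈ s | G.Adj v w}

lemma degreeOn_mono (hst : s ⊆ t) : G.degreeOn s v ≤ G.degreeOn t v :=
  card_le_card (filter_subset_filter _ hst)

lemma degreeOn_lt_card (hv : v ∈ s) : G.degreeOn s v < #s :=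
  card_lt_card (filter_ssubset.2 ⟨v, hv, G.irrefl⟩)

lemma degreeOn_univ [Fintype V] : G.degreeOn univ v = G.degree v := by
  rw [degreeOn, ← card_neighborFinset_eq_degree, neighborFinset_eq_filter]

end degreeOn

end SimpleGraph

variable [DecidableEq V]

def coveredVerts (M : Finset (Sym2 V)) : Finset V := M.biUnion Sym2.toFinset

@[simp]
lemma mem_coveredVerts : v ∈ coveredVerts M ↔ ∃ e ∈ M, v ∈ e := by
  simp [coveredVerts]

lemma coveredVerts_mono (h : M ⊆ N) : coveredVerts M ⊆ coveredVerts N :=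
  biUnion_subset_biUnion_of_subset_left _ h

lemma mem_coveredVerts_erase (hv : v ∈ coveredVerts M) (he : v ∉ e) :
    v ∈ coveredVerts (M.erase e) := by
  obtain ⟨f, hf, hvf⟩ := mem_coveredVerts.1 hv
  exact mem_coveredVerts.2 ⟨f, mem_erase.2 ⟨fun h ↦ he (h ▸ hvf), hf⟩, hvf⟩

@[simp]
lemma coveredVerts_insert_mk :
    coveredVerts (insert s(x, y) M) = insert x (insert y (coveredVerts M)) := by
  simp [coveredVerts, Sym2.toFinset_mk_eq]

lemma card_insert_mk_of_notMem (hx : x ∉ coveredVerts M) : #(insert s(x, y) M) = #M + 1 :=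
  card_insert_of_notMem fun h ↦ hx (mem_coveredVerts.2 ⟨_, h, Sym2.mem_mk_left x y⟩)

namespace IsMatchingSet

lemma insert_mk (hM : IsMatchingSet G M) (hxy : G.Adj x y) (hx : x ∉ coveredVerts M)
    (hy : y ∉ coveredVerts M) : IsMatchingSet G (insert s(x, y) M) := by
  refine ⟨by simpa [forall_and] using ⟨hxy, hM.1⟩, ?_⟩
  simp only [mem_coveredVerts, not_exists, not_and] at hx hy
  simp only [mem_insert]
  rintro e (rfl | he) f (rfl | hf) hef v hve hvf
  · exact hef rfl
  · rcases Sym2.mem_iff.1 hve with rfl | rfl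
    exacts [hx f hf hvf, hy f hf hvf]
  · rcases Sym2.mem_iff.1 hvf with rfl | rfl
    exacts [hx e he hve, hy e he hve]
  · exact hM.2 e he f hf hef v hve hvf

lemma notMem_coveredVerts_erase (hM : IsMatchingSet G M) (he : e ∈ M) (hv : v ∈ e) :
    v ∉ coveredVerts (M.erase e) := by
  simp only [mem_coveredVerts, mem_erase, not_exists, not_and, and_imp]
  exact fun f hfe hf hvf ↦ hM.2 f hf e he hfe v hvf hv

lemma exists_adj_mk_mem (hM : IsMatchingSet G M) (hv : v ∈ coveredVerts M) :
    ∃ w, G.Adj v w ∧ s(v, w) ∈ M := by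
  obtain ⟨e, he, hve⟩ := mem_coveredVerts.1 hv
  obtain ⟨w, rfl⟩ := Sym2.mem_iff_exists.1 hve
  exact ⟨w, hM.1 _ he, he⟩

lemma card_coveredVerts (hM : IsMatchingSet G M) : #(coveredVerts M) = 2 * #M := by
  rw [coveredVerts, card_biUnion, sum_const_nat, mul_comm]
  · intro e he
    exact Sym2.card_toFinset_of_not_isDiag e (G.not_isDiag_of_mem_edgeSet (hM.1 e he))
  · intro e he f hf hef
    simp only [Function.onFun, Finset.disjoint_left, Sym2.mem_toFinset]
    exact hM.2 e he f hf hef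

end IsMatchingSet

namespace SimpleGraph

def IsMatchingOn (G : SimpleGraph V) (s : Finset V) (M : Finset (Sym2 V)) : Prop :=
  IsMatchingSet G M ∧ coveredVerts M ⊆ s

open Classical in
noncomputable def matchingNumberOn (G : SimpleGraph V) (s : Finset V) : ℕ :=
  (s.sym2.powerset.filter (G.IsMatchingOn s)).sup card

lemma isMatchingOn_empty : G.IsMatchingOn s ∅ :=
  ⟨⟨by simp, by simp⟩, by simp [coveredVerts]⟩

namespace IsMatchingOn

lemma mono (hM : G.IsMatchingOn s M) (hst : s ⊆ t) : G.IsMatchingOn t M :=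
  ⟨hM.1, hM.2.trans hst⟩

lemma notMem_coveredVerts (hM : G.IsMatchingOn s M) (hv : v ∉ s) : v ∉ coveredVerts M :=
  fun h ↦ hv (hM.2 h)

lemma erase_of_notMem (hM : G.IsMatchingOn s M) (hv : v ∉ coveredVerts M) :
    G.IsMatchingOn (s.erase v) M :=
  ⟨hM.1, fun _ hx ↦ mem_erase.2 ⟨ne_of_mem_of_not_mem hx hv, hM.2 hx⟩⟩

lemma erase_mk (hM : G.IsMatchingOn s M) (h : s(x, y) ∈ M) :
    G.IsMatchingOn ((s.erase x).erase y) (M.erase s(x, y)) := by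
  refine ⟨hM.1.subset (erase_subset _ _), fun v hv ↦ ?_⟩
  have hv' : v ∉ s(x, y) := fun hv' ↦ hM.1.notMem_coveredVerts_erase h hv' hv
  rw [Sym2.mem_iff, not_or] at hv'
  exact mem_erase.2 ⟨hv'.2, mem_erase.2 ⟨hv'.1, hM.2 (coveredVerts_mono (erase_subset _ _) hv)⟩⟩

lemma insert_mk (hM : G.IsMatchingOn s M) (hxy : G.Adj x y) (hx : x ∉ coveredVerts M)
    (hy : y ∉ coveredVerts M) : G.IsMatchingOn (insert x (insert y s)) (insert s(x, y) M) :=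
  ⟨hM.1.insert_mk hxy hx hy, by simpa using insert_subset_insert _ (insert_subset_insert _ hM.2)⟩

lemma subset_sym2 (hM : G.IsMatchingOn s M) : M ⊆ s.sym2 := fun e he ↦
  mem_sym2_iff.2 fun _ hv ↦ hM.2 (mem_coveredVerts.2 ⟨e, he, hv⟩)

lemma card_le (hM : G.IsMatchingOn s M) : #M ≤ G.matchingNumberOn s := by
  classical
  exact le_sup (f := card) (mem_filter.2 ⟨mem_powerset.2 hM.subset_sym2, hM⟩)

lemma card_lt_of_adj (hM : G.IsMatchingOn s M) (hxy : G.Adj x y) (hxs : x ∈ s) (hys : y ∈ s)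
    (hx : x ∉ coveredVerts M) (hy : y ∉ coveredVerts M) : #M < G.matchingNumberOn s := by
  have hM' := (hM.insert_mk hxy hx hy).mono (insert_subset hxs (insert_subset hys subset_rfl))
  simpa [card_insert_mk_of_notMem hx] using hM'.card_le

end IsMatchingOn

lemma exists_isMatchingOn_card_eq (G : SimpleGraph V) (s : Finset V) :
    ∃ M, G.IsMatchingOn s M ∧ #M = G.matchingNumberOn s := by
  classical
  obtain ⟨M, hM, hcard⟩ := exists_mem_eq_sup (s.sym2.powerset.filter (G.IsMatchingOn s))
    ⟨∅, mem_filter.2 ⟨empty_mem_powerset _, isMatchingOn_empty⟩⟩ card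
  exact ⟨M, (mem_filter.1 hM).2, by rw [matchingNumberOn, hcard]⟩

lemma matchingNumberOn_mono (hst : s ⊆ t) : G.matchingNumberOn s ≤ G.matchingNumberOn t := by
  obtain ⟨M, hM, hcard⟩ := G.exists_isMatchingOn_card_eq s
  exact hcard ▸ (hM.mono hst).card_le

lemma matchingNumberOn_add_le (hst : Disjoint s t) :
    G.matchingNumberOn s + G.matchingNumberOn t ≤ G.matchingNumberOn (s ∪ t) := by
  obtain ⟨M, hM, hMc⟩ := G.exists_isMatchingOn_card_eq s
  obtain ⟨N, hN, hNc⟩ := G.exists_isMatchingOn_card_eq t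
  have hdisj : ∀ e ∈ M, ∀ f ∈ N, ∀ v ∈ e, v ∉ f := fun e he f hf v hve hvf ↦
    Finset.disjoint_left.1 hst (hM.2 (mem_coveredVerts.2 ⟨e, he, hve⟩))
      (hN.2 (mem_coveredVerts.2 ⟨f, hf, hvf⟩))
  have hMN : G.IsMatchingOn (s ∪ t) (M ∪ N) := by
    refine ⟨⟨fun e he ↦ ?_, fun e he f hf hef ↦ ?_⟩, ?_⟩
    · rcases mem_union.1 he with he | he
      exacts [hM.1.1 e he, hN.1.1 e he]
    · rcases mem_union.1 he with he | he <;> rcases mem_union.1 hf with hf | hf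
      · exact hM.1.2 e he f hf hef
      · exact hdisj e he f hf
      · exact fun v hve hvf ↦ hdisj f hf e he v hvf hve
      · exact hN.1.2 e he f hf hef
    · rw [coveredVerts, union_biUnion]
      exact union_subset_union hM.2 hN.2
  have hcard : #(M ∪ N) = #M + #N := card_union_of_disjoint <| Finset.disjoint_left.2 fun e he hf ↦
    hdisj e he e hf _ (Sym2.out_fst_mem e) (Sym2.out_fst_mem e)
  rw [← hMc, ← hNc, ← hcard]
  exact hMN.card_le

def CanSwap (G : SimpleGraph V) (s : Finset V) (M : Finset (Sym2 V)) (y u : V) : Prop :=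
  ∃ M', G.IsMatchingOn s M' ∧ #M' = #M ∧ coveredVerts M' ⊆ insert u (coveredVerts M) \ {y}

/-- One step along the alternating path `u u₁ u₂ ⋯` with `u u₁ ∈ N` and `u₁ u₂ ∈ M`; the case
`y = u₂` is the end of the path. -/
lemma canSwap_of_canSwap_erase {u₁ u₂ : V} (hM : G.IsMatchingOn s M)
    (hN : G.IsMatchingOn s N) (huM : u ∉ coveredVerts M) (he : s(u, u₁) ∈ N)
    (hf : s(u₁, u₂) ∈ M) (hyM : y ∈ coveredVerts M) (hyN : y ∉ coveredVerts N)
    (hu₂ : u₂ ∈ insert y (coveredVerts N))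
    (hMy : G.CanSwap ((s.erase u).erase u₁) (M.erase s(u₁, u₂)) y u₂)
    (hNy : G.CanSwap ((s.erase u).erase u₁) (N.erase s(u, u₁)) u₂ y) :
    G.CanSwap s M y u ∧ G.CanSwap s N u y := by
  obtain ⟨M₀, hM₀, hM₀c, hM₀v⟩ := hMy
  obtain ⟨N₀, hN₀, hN₀c, hN₀v⟩ := hNy
  have huM₀ := hM₀.notMem_coveredVerts (v := u) (by simp)
  have hu₁M₀ := hM₀.notMem_coveredVerts (v := u₁) (by simp)
  have huN₀ := hN₀.notMem_coveredVerts (v := u) (by simp)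
  have hu₁N₀ := hN₀.notMem_coveredVerts (v := u₁) (by simp)
  have hu₁N : u₁ ∈ coveredVerts N := mem_coveredVerts.2 ⟨_, he, Sym2.mem_mk_right _ _⟩
  have hu₁M : u₁ ∈ coveredVerts M := mem_coveredVerts.2 ⟨_, hf, Sym2.mem_mk_left _ _⟩
  have hu₂M : u₂ ∈ coveredVerts M := mem_coveredVerts.2 ⟨_, hf, Sym2.mem_mk_right _ _⟩
  have hus : u ∈ s := hN.2 (mem_coveredVerts.2 ⟨_, he, Sym2.mem_mk_left _ _⟩)
  have hyu : y ≠ u := ne_of_mem_of_not_mem hyM huM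
  have hu₂u : u₂ ≠ u := ne_of_mem_of_not_mem hu₂M huM
  have huu₁ : u ≠ u₁ := (hN.1.1 _ he).ne
  have hyu₁ : y ≠ u₁ := fun h ↦ hyN (h ▸ hu₁N)
  have hMv := coveredVerts_mono (erase_subset s(u₁, u₂) M)
  have hNv := coveredVerts_mono (erase_subset s(u, u₁) N)
  have hs : ∀ {x y}, x ∈ s → y ∈ s → insert x (insert y ((s.erase u).erase u₁)) ⊆ s :=
    fun hx hy ↦ insert_subset hx (insert_subset hy ((erase_subset _ _).trans (erase_subset _ _)))
  refine ⟨⟨insert s(u, u₁) M₀, ?_, ?_, ?_⟩, ⟨insert s(u₁, u₂) N₀, ?_, ?_, ?_⟩⟩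
  · exact (hM₀.insert_mk (hN.1.1 _ he) huM₀ hu₁M₀).mono (hs hus (hN.2 hu₁N))
  · rw [card_insert_mk_of_notMem huM₀, hM₀c, card_erase_add_one hf]
  · rw [coveredVerts_insert_mk]
    grind
  · exact (hN₀.insert_mk (hM.1.1 _ hf) hu₁N₀ (by grind)).mono (hs (hN.2 hu₁N) (hM.2 hu₂M))
  · rw [card_insert_mk_of_notMem hu₁N₀, hN₀c, card_erase_add_one he]
  · rw [coveredVerts_insert_mk]
    grind

lemma IsMatchingOn.exchange (hM : G.IsMatchingOn s M) (hN : G.IsMatchingOn s N)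
    (huN : u ∈ coveredVerts N) (huM : u ∉ coveredVerts M) :
    #M < G.matchingNumberOn s ∨
      ∃ y ∈ coveredVerts M, y ∉ coveredVerts N ∧ G.CanSwap s M y u ∧ G.CanSwap s N u y := by
  induction s using Finset.strongInduction generalizing M N u with
  | H s ih =>
  obtain ⟨u₁, huu₁, he⟩ := hN.1.exists_adj_mk_mem huN
  have hu₁N : u₁ ∈ coveredVerts N := mem_coveredVerts.2 ⟨_, he, Sym2.mem_mk_right _ _⟩
  by_cases hu₁M : u₁ ∉ coveredVerts M
  · exact Or.inl (hM.card_lt_of_adj huu₁ (hN.2 huN) (hN.2 hu₁N) huM hu₁M)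
  rw [not_not] at hu₁M
  obtain ⟨u₂, hu₁u₂, hf⟩ := hM.1.exists_adj_mk_mem hu₁M
  have hu₂M : u₂ ∈ coveredVerts M := mem_coveredVerts.2 ⟨_, hf, Sym2.mem_mk_right _ _⟩
  have hM₀ : G.IsMatchingOn ((s.erase u).erase u₁) (M.erase s(u₁, u₂)) :=
    ((hM.erase_of_notMem huM).erase_mk hf).mono (erase_subset _ _)
  have hN₀ : G.IsMatchingOn ((s.erase u).erase u₁) (N.erase s(u, u₁)) := hN.erase_mk he
  have hu₂M₀ : u₂ ∉ coveredVerts (M.erase s(u₁, u₂)) :=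
    hM.1.notMem_coveredVerts_erase hf (Sym2.mem_mk_right _ _)
  by_cases hu₂N : u₂ ∈ coveredVerts N
  swap
  · refine Or.inr ⟨u₂, hu₂M, hu₂N, canSwap_of_canSwap_erase hM hN huM he hf hu₂M hu₂N
      (mem_insert_self _ _) ⟨_, hM₀, rfl, ?_⟩ ⟨_, hN₀, rfl, ?_⟩⟩
    · grind
    · have := coveredVerts_mono (erase_subset s(u, u₁) N)
      grind
  have hu₂e : u₂ ∉ s(u, u₁) := by
    simpa [Sym2.mem_iff] using ⟨ne_of_mem_of_not_mem hu₂M huM, hu₁u₂.ne'⟩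
  have hss : (s.erase u).erase u₁ ⊂ s := (erase_subset _ _).trans_ssubset (erase_ssubset (hN.2 huN))
  rcases ih _ hss hM₀ hN₀ (mem_coveredVerts_erase hu₂N hu₂e) hu₂M₀ with
    hlt | ⟨y, hyM₀, hyN₀, hMy, hNy⟩
  · obtain ⟨P, hP, hPc⟩ := G.exists_isMatchingOn_card_eq ((s.erase u).erase u₁)
    have := (hP.mono hss.subset).card_lt_of_adj huu₁ (hN.2 huN) (hN.2 hu₁N)
      (hP.notMem_coveredVerts (by simp)) (hP.notMem_coveredVerts (by simp))
    have := card_erase_add_one hf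
    exact Or.inl (by omega)
  · have hye : y ∉ s(u, u₁) := fun h ↦ by
      have := hM₀.2 hyM₀
      rcases Sym2.mem_iff.1 h with rfl | rfl <;> simp at this
    have hyM := coveredVerts_mono (erase_subset _ _) hyM₀
    have hyN : y ∉ coveredVerts N := fun h ↦ hyN₀ (mem_coveredVerts_erase h hye)
    exact Or.inr ⟨y, hyM, hyN, canSwap_of_canSwap_erase hM hN huM he hf hyM hyN
      (mem_insert_of_mem hu₂N) hMy hNy⟩

lemma eq_of_walk_of_notMem_coveredVerts
    (hin : ∀ v ∈ s, G.matchingNumberOn (s.erase v) = G.matchingNumberOn s) {u w : V}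
    (p : (G.restrict s).Walk u w) (hM : G.IsMatchingOn s M) (hMc : #M = G.matchingNumberOn s)
    (hu : u ∉ coveredVerts M) (hw : w ∉ coveredVerts M) : u = w := by
  induction p generalizing M with
  | nil => rfl
  | @cons u z w huz q ih =>
  obtain ⟨huz, hus, hzs⟩ := restrict_adj.1 huz
  by_contra huw
  have hzM : z ∈ coveredVerts M := by
    by_contra hzM
    exact (hM.card_lt_of_adj huz hus hzs hu hzM).ne hMc
  obtain ⟨N, hN, hNc⟩ := G.exists_isMatchingOn_card_eq (s.erase z)
  rw [hin z hzs] at hNc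
  have hzN : z ∉ coveredVerts N := hN.notMem_coveredVerts (notMem_erase z s)
  replace hN := hN.mono (erase_subset z s)
  have huN : u ∈ coveredVerts N := by
    by_contra huN
    exact (hN.card_lt_of_adj huz hus hzs huN hzN).ne hNc
  rcases hM.exchange hN huN hu with hlt | ⟨y, -, -, ⟨M', hM', hM'c, hM'v⟩, ⟨N', hN', hN'c, hN'v⟩⟩
  · exact hlt.ne hMc
  by_cases hyz : y = z
  · subst hyz
    exact ne_of_mem_of_not_mem hzM hw (ih hM' (hM'c.trans hMc) (by grind) (by grind))
  · exact (hN'.card_lt_of_adj huz hus hzs (by grind) (by grind)).ne (hN'c.trans hNc)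

theorem card_le_two_mul_matchingNumberOn_add_one
    (hconn : ∀ x ∈ s, ∀ y ∈ s, (G.restrict s).Reachable x y)
    (hin : ∀ v ∈ s, G.matchingNumberOn (s.erase v) = G.matchingNumberOn s) :
    #s ≤ 2 * G.matchingNumberOn s + 1 := by
  obtain ⟨M, hM, hMc⟩ := G.exists_isMatchingOn_card_eq s
  have hfree : #(s \ coveredVerts M) ≤ 1 := card_le_one.2 fun u hu w hw ↦ by
    rw [mem_sdiff] at hu hw
    exact eq_of_walk_of_notMem_coveredVerts hin (hconn u hu.1 w hw.1).some hM hMc hu.2 hw.2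
  have := card_sdiff_add_card_eq_card hM.2
  rw [hM.1.card_coveredVerts, hMc] at this
  omega

lemma exists_separation (h : ¬ ∀ x ∈ s, ∀ y ∈ s, (G.restrict s).Reachable x y) :
    ∃ t ⊂ s, t.Nonempty ∧ ∀ x ∈ t, ∀ y ∈ s \ t, ¬ G.Adj x y := by
  classical
  push Not at h
  obtain ⟨x, hx, y, hy, hxy⟩ := h
  refine ⟨{z ∈ s | (G.restrict s).Reachable x z}, filter_ssubset.2 ⟨y, hy, hxy⟩,
    ⟨x, mem_filter.2 ⟨hx, Reachable.rfl⟩⟩, fun z hz w hw hzw ↦ ?_⟩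
  rw [mem_filter] at hz
  rw [mem_sdiff, mem_filter] at hw
  exact hw.2 ⟨hw.1, hz.2.trans (restrict_adj.2 ⟨hzw, hz.1, hw.1⟩).reachable⟩

section degreeOn

variable [DecidableRel G.Adj] {b Δ : ℕ}

lemma degreeOn_eq_of_subset (hts : t ⊆ s) (h : ∀ w ∈ s \ t, ¬ G.Adj v w) :
    G.degreeOn s v = G.degreeOn t v := by
  refine congrArg card (ext fun w ↦ ?_)
  simp only [mem_filter]
  exact ⟨fun ⟨hw, hvw⟩ ↦ ⟨by_contra fun hwt ↦ h w (mem_sdiff.2 ⟨hw, hwt⟩) hvw, hvw⟩,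
    fun ⟨hw, hvw⟩ ↦ ⟨hts hw, hvw⟩⟩

lemma degreeOn_le_degreeOn_erase_add (v w : V) :
    G.degreeOn s w ≤ G.degreeOn (s.erase v) w + if G.Adj w v then 1 else 0 := by
  rw [degreeOn, degreeOn, filter_erase]
  split_ifs with hwv
  · have := pred_card_le_card_erase (s := {x ∈ s | G.Adj w x}) (a := v)
    omega
  · rw [erase_eq_of_notMem (by simp [hwv])]
    omega

lemma sum_min_degreeOn_le_sum_erase (hv : v ∈ s) :
    ∑ w ∈ s, min (G.degreeOn s w) b ≤
      ∑ w ∈ s.erase v, min (G.degreeOn (s.erase v) w) b + G.degreeOn s v + b := by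
  have hterm : ∀ w, min (G.degreeOn s w) b ≤
      min (G.degreeOn (s.erase v) w) b + if G.Adj w v then 1 else 0 := fun w ↦ by
    have := G.degreeOn_le_degreeOn_erase_add (s := s) v w
    omega
  have hnbr : #{w ∈ s.erase v | G.Adj w v} ≤ G.degreeOn s v := by
    simpa only [degreeOn, adj_comm] using card_le_card (filter_subset_filter _ (erase_subset v s))
  rw [← sum_erase_add s _ hv]
  calc ∑ w ∈ s.erase v, min (G.degreeOn s w) b + min (G.degreeOn s v) b
      ≤ ∑ w ∈ s.erase v, (min (G.degreeOn (s.erase v) w) b + if G.Adj w v then 1 else 0) + b :=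
        add_le_add (sum_le_sum fun w _ ↦ hterm w) (min_le_right _ _)
    _ ≤ _ := by rw [sum_add_distrib, sum_boole, Nat.cast_id]; omega

lemma sum_min_degreeOn_eq_add (hts : t ⊆ s) (hsep : ∀ x ∈ t, ∀ y ∈ s \ t, ¬ G.Adj x y) :
    ∑ v ∈ s, min (G.degreeOn s v) b =
      ∑ v ∈ t, min (G.degreeOn t v) b + ∑ v ∈ s \ t, min (G.degreeOn (s \ t) v) b := by
  rw [← sum_sdiff hts, add_comm]
  congr 1
  · refine sum_congr rfl fun v hv ↦ ?_
    rw [degreeOn_eq_of_subset hts (hsep v hv)]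
  · refine sum_congr rfl fun v hv ↦ ?_
    refine congrArg (min · b) (degreeOn_eq_of_subset sdiff_subset fun w hw hvw ↦ ?_)
    rw [sdiff_sdiff_right_self, inf_eq_inter, mem_inter] at hw
    exact hsep w hw.2 v hv hvw.symm

theorem sum_min_degreeOn_le (hb : b + 2 ≤ Δ) (hd : ∀ v ∈ s, G.degreeOn s v ≤ Δ) :
    ∑ v ∈ s, min (G.degreeOn s v) b ≤ G.matchingNumberOn s * (b + Δ) := by
  induction s using Finset.strongInduction with
  | H s ih =>
  replace ih : ∀ t ⊂ s, ∑ v ∈ t, min (G.degreeOn t v) b ≤ G.matchingNumberOn t * (b + Δ) :=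
    fun t hts ↦ ih t hts fun v hv ↦ (degreeOn_mono hts.subset).trans (hd v (hts.subset hv))
  by_cases hess : ∃ v ∈ s, G.matchingNumberOn (s.erase v) < G.matchingNumberOn s
  · obtain ⟨v, hv, hlt⟩ := hess
    calc ∑ w ∈ s, min (G.degreeOn s w) b
        ≤ ∑ w ∈ s.erase v, min (G.degreeOn (s.erase v) w) b + G.degreeOn s v + b :=
          sum_min_degreeOn_le_sum_erase hv
      _ ≤ (G.matchingNumberOn (s.erase v) + 1) * (b + Δ) := by
          have := ih _ (erase_ssubset hv)
          have := hd v hv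
          rw [add_one_mul]
          omega
      _ ≤ G.matchingNumberOn s * (b + Δ) := Nat.mul_le_mul_right _ hlt
  push Not at hess
  by_cases hconn : ∀ x ∈ s, ∀ y ∈ s, (G.restrict s).Reachable x y
  · have hin : ∀ v ∈ s, G.matchingNumberOn (s.erase v) = G.matchingNumberOn s :=
      fun v hv ↦ (matchingNumberOn_mono (erase_subset v s)).antisymm (hess v hv)
    calc ∑ v ∈ s, min (G.degreeOn s v) b
        ≤ ∑ _v ∈ s, min (#s - 1) b :=
          sum_le_sum fun v hv ↦ min_le_min_right _ (Nat.le_sub_one_of_lt (degreeOn_lt_card hv))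
      _ ≤ G.matchingNumberOn s * (b + Δ) := by
          rw [sum_const, smul_eq_mul]
          exact Nat.mul_min_sub_one_le hb (card_le_two_mul_matchingNumberOn_add_one hconn hin)
  · obtain ⟨t, hts, htne, hsep⟩ := exists_separation hconn
    calc ∑ v ∈ s, min (G.degreeOn s v) b
        = ∑ v ∈ t, min (G.degreeOn t v) b + ∑ v ∈ s \ t, min (G.degreeOn (s \ t) v) b :=
          sum_min_degreeOn_eq_add hts.subset hsep
      _ ≤ (G.matchingNumberOn t + G.matchingNumberOn (s \ t)) * (b + Δ) := by
          rw [add_mul]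
          exact add_le_add (ih t hts) (ih _ (sdiff_ssubset hts.subset htne))
      _ ≤ G.matchingNumberOn s * (b + Δ) := by
          gcongr
          simpa [union_sdiff_of_subset hts.subset] using
            matchingNumberOn_add_le (G := G) (disjoint_sdiff : Disjoint t (s \ t))

end degreeOn

end SimpleGraph

end

theorem sum_min_degree_le_general {V : Type*} [Fintype V] (G : SimpleGraph V)
    [DecidableRel G.Adj] (b Δ : ℕ) (hb : b + 2 ≤ Δ)
    (hd : ∀ v : V, G.degree v ≤ Δ) :
    ∃ M : Finset (Sym2 V), IsMatchingSet G M ∧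
      ∑ v : V, min (G.degree v) b ≤ M.card * (b + Δ) := by
  classical
  obtain ⟨M, hM, hMc⟩ := G.exists_isMatchingOn_card_eq univ
  refine ⟨M, hM.1, ?_⟩
  have := G.sum_min_degreeOn_le (s := univ) hb fun v _ ↦ SimpleGraph.degreeOn_univ (G := G) ▸ hd v
  simpa only [SimpleGraph.degreeOn_univ, hMc] using this

theorem sum_min_degree_le {V : Type*} [Fintype V] [DecidableEq V] (G : SimpleGraph V)
    [DecidableRel G.Adj] (b Δ : ℕ) (hb : b + 2 ≤ Δ)
    (hd : ∀ v : V, G.degree v ≤ Δ) :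
    ∃ M : Finset (Sym2 V), IsMatchingSet G M ∧
      ∑ v : V, min (G.degree v) b ≤ M.card * (b + Δ) :=
  sum_min_degree_le_general G b Δ hb hd
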